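/- arXiv:2012.04601 — 2 statements merged into one kernel-verified Lean document; each statement's English description precedes it below -/
import Mathlib

section
/- Let M be an n×n real matrix with diagonal entries m₁₁, …, mₙₙ, let D be the diagonal matrix with the same diagonal entries as M, and for a real number t let M_t = M + (t − 1)·D. For each i ≤ n, viewing the coefficient of x^i in the characteristic polynomial of M_t as a polynomial P_i in t, the coefficient of t^{n−i} in P_i equals the (n−i)-th elementary symmetric polynomial evaluated at the negated diagonal entries (−m₁₁, …, −mₙₙ). -/
open Matrix Polynomial

/-!
With `D` the diagonal part of `M`, we have `M_t = t • D + (M - D)`, so `det (x - M_t)` is a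
polynomial in `x` and `t` of total degree at most `n`, and the coefficient of `x^i t^(n-i)` lies
in its top homogeneous part. Substituting `x ↦ t x` and exchanging the two variables moves it to
the coefficient of `x^i t^n` of `det (t (x - D) - (M - D))`. The coefficient of `t^n` of this
determinant is `det (x - D) = ∏ j, (x - m_jj)`, and Vieta's formula reads off its coefficients.
-/

open scoped Polynomial.Bivariate

namespace Polynomial.Bivariate

theorem coeff_coeff_swap {R : Type*} [CommSemiring R] (p : R[X][Y]) (a b : ℕ) :
    ((swap p).coeff a).coeff b = (p.coeff b).coeff a := by
  induction p using Polynomial.induction_on' with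
  | add p q hp hq => simp [hp, hq]
  | monomial m f =>
    induction f using Polynomial.induction_on' with
    | add f g hf hg => simp_all
    | monomial k r =>
      by_cases hm : m = b <;> by_cases hk : k = a <;>
        simp [swap_monomial_monomial, coeff_monomial, hm, hk]

end Polynomial.Bivariate

open Polynomial.Bivariate

namespace Matrix

variable {ι R : Type*} [CommRing R]

theorem map_evalRingHom_X_smul_add_C (A B : Matrix ι ι R) (t : R) :
    ((X : R[X]) • A.map C + B.map C).map (evalRingHom t) = t • A + B := by
  ext j k
  simp only [map_apply, add_apply, smul_apply, smul_eq_mul, coe_evalRingHom, eval_add, eval_mul,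
    eval_X, eval_C]

variable [Fintype ι] [DecidableEq ι]

theorem swap_comp_charpoly_X_smul_add_C (A B : Matrix ι ι R) :
    Bivariate.swap (R := R) (((X : R[X]) • A.map C + B.map C).charpoly.comp (C X * Y)) =
      det ((Y : R[X][Y]) • (charmatrix A).map C + ((-B).map C).map C) := by
  rw [charpoly, ← coe_compRingHom_apply, RingHom.map_det, AlgEquiv.map_det]
  congr 1
  refine Matrix.ext fun j k => ?_
  rcases eq_or_ne j k with rfl | h
  · simp only [RingHom.mapMatrix_apply, coe_compRingHom, AlgEquiv.mapMatrix_apply, map_apply,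
      charmatrix_apply_eq, add_apply, smul_apply, smul_eq_mul, X_mul_C, map_add, map_mul, sub_comp,
      X_comp, add_comp, mul_comp, C_comp, map_sub, swap_X, swap_Y, swap_C_C, map_map, neg_apply,
      Function.comp_apply, map_neg]
    ring
  · simp only [RingHom.mapMatrix_apply, coe_compRingHom, AlgEquiv.mapMatrix_apply, map_apply,
      charmatrix_apply_ne _ _ _ h, add_apply, smul_apply, smul_eq_mul, X_mul_C, map_add, map_mul,
      neg_add_rev, add_comp, neg_comp, C_comp, mul_comp, map_neg, swap_C_C, swap_X, map_map,
      neg_apply, Function.comp_apply]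
    ring

theorem coeff_coeff_charpoly_X_smul_add_C (A B : Matrix ι ι R) {i : ℕ}
    (hi : i ≤ Fintype.card ι) :
    (((X : R[X]) • A.map C + B.map C).charpoly.coeff i).coeff (Fintype.card ι - i) =
      A.charpoly.coeff i := by
  set c := ((X : R[X]) • A.map C + B.map C).charpoly
  calc (c.coeff i).coeff (Fintype.card ι - i)
      = ((c.comp (C X * Y)).coeff i).coeff (Fintype.card ι) := by
        rw [comp_C_mul_X_coeff, coeff_mul_X_pow', if_pos hi]
    _ = ((Bivariate.swap (R := R) (c.comp (C X * Y))).coeff (Fintype.card ι)).coeff i :=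
        (coeff_coeff_swap _ _ _).symm
    _ = A.charpoly.coeff i := by
        rw [swap_comp_charpoly_X_smul_add_C, coeff_det_X_add_C_card, charpoly]

theorem coeff_charpoly_diagonal (d : ι → R) {i : ℕ} (hi : i ≤ Fintype.card ι) :
    (diagonal d).charpoly.coeff i =
      ∑ s ∈ Finset.univ.powersetCard (Fintype.card ι - i), ∏ j ∈ s, -d j := by
  simp_rw [charpoly_diagonal, sub_eq_add_neg, ← C_neg]
  exact Finset.prod_X_add_C_coeff _ _ hi

end Matrix

theorem stmt_1 (n : ℕ) (M : Matrix (Fin n) (Fin n) ℝ)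
    (D : Matrix (Fin n) (Fin n) ℝ) (hD : D = Matrix.diagonal (fun i => M i i)) :
    ∀ i ≤ n, ∀ P : Polynomial ℝ,
      (∀ t : ℝ, P.eval t = (M + (t - 1) • D).charpoly.coeff i) →
      P.coeff (n - i) =
        ∑ s ∈ Finset.univ.powersetCard (n - i), ∏ j ∈ s, (-(M j j)) := by
  intro i hi P hP
  have hi' : i ≤ Fintype.card (Fin n) := by simpa using hi
  have hP' : P = ((X : ℝ[X]) • D.map C + (M - D).map C).charpoly.coeff i := by
    refine Polynomial.funext fun t => ?_
    have hMt : M + (t - 1) • D = t • D + (M - D) := by module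
    rw [hP, hMt, ← map_evalRingHom_X_smul_add_C, charpoly_map, coeff_map, coe_evalRingHom]
  have hcoeff := coeff_coeff_charpoly_X_smul_add_C D (M - D) hi'
  rw [Fintype.card_fin] at hcoeff
  rw [hP', hcoeff, hD, coeff_charpoly_diagonal _ hi', Fintype.card_fin]
end

section
/- Let M be an n×n real matrix (n ≥ 1), let D be the diagonal matrix with the same diagonal entries as M, and for a real number t let M_t = M + (t − 1)·D. Let Ω = { t ∈ ℝ : there exists i < n such that the coefficient of x^i in the characteristic polynomial of M_t equals 0 } (the set of real roots of the coefficient polynomials p_i). Suppose σ ∈ ℝ satisfies: (i) 0 is a root of the characteristic polynomial of M_σ (i.e., det(M_σ) = 0); (ii) every complex root of the characteristic polynomial of M_σ has real part at most 0; and (iii) for every real σ' > σ, every complex root of the characteristic polynomial of M_{σ'} has strictly negative real part. Then σ is the greatest element of Ω, i.e., σ ∈ Ω and t ≤ σ for all t ∈ Ω. -/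
/-!
The constant coefficient of `det (x I - M_σ)` is `± det M_σ = 0`, so `σ ∈ Ω`. Conversely, for
`t > σ` every complex root of the characteristic polynomial of `M_t` has negative real part, and a
monic real polynomial with this property has only positive coefficients (Stodola's condition): it
factors into linear factors `X + a` and quadratic factors `X² + bX + c` with `a, b, c > 0`. Hence no
coefficient vanishes and `t ∉ Ω`.
-/

open Matrix Polynomial

namespace Polynomial

section OrderedSemiring

variable {R : Type*} [Semiring R] [PartialOrder R]

def HasPosCoeffs (p : R[X]) : Prop := ∀ i ≤ p.natDegree, 0 < p.coeff i

lemma HasPosCoeffs.coeff_nonneg {p : R[X]} (hp : p.HasPosCoeffs) (i : ℕ) : 0 ≤ p.coeff i := by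
  rcases le_or_gt i p.natDegree with h | h
  · exact (hp i h).le
  · rw [coeff_eq_zero_of_natDegree_lt h]

variable [IsStrictOrderedRing R]

lemma HasPosCoeffs.mul {p q : R[X]} (hp : p.HasPosCoeffs) (hq : q.HasPosCoeffs) :
    (p * q).HasPosCoeffs := by
  intro i hi
  have hlead : p.leadingCoeff * q.leadingCoeff ≠ 0 := (mul_pos (hp _ le_rfl) (hq _ le_rfl)).ne'
  rw [natDegree_mul' hlead] at hi
  rw [coeff_mul]
  refine Finset.sum_pos' (fun x _ => mul_nonneg (hp.coeff_nonneg _) (hq.coeff_nonneg _))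
    ⟨(min i p.natDegree, i - min i p.natDegree), ?_,
      mul_pos (hp _ (min_le_right _ _)) (hq _ (by omega))⟩
  rw [Finset.HasAntidiagonal.mem_antidiagonal]
  omega

lemma hasPosCoeffs_one : (1 : R[X]).HasPosCoeffs := by
  intro i hi
  rw [natDegree_one, Nat.le_zero] at hi
  simp [hi]

lemma hasPosCoeffs_X_add_C {a : R} (ha : 0 < a) : (X + C a).HasPosCoeffs := by
  intro i hi
  rw [natDegree_X_add_C] at hi
  interval_cases i <;> simp [ha]

lemma hasPosCoeffs_quadratic {b c : R} (hb : 0 < b) (hc : 0 < c) :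
    (X ^ 2 + C b * X + C c).HasPosCoeffs := by
  have hdeg : (X ^ 2 + C b * X + C c).natDegree = 2 := by compute_degree!
  intro i hi
  rw [hdeg] at hi
  interval_cases i <;> simp [coeff_X, hb, hc]

end OrderedSemiring

lemma exists_monic_dvd_hasPosCoeffs_of_aeval_eq_zero {p : ℝ[X]} {z : ℂ} (hz : aeval z p = 0)
    (hre : z.re < 0) : ∃ f : ℝ[X], f.Monic ∧ 0 < f.natDegree ∧ f.HasPosCoeffs ∧ f ∣ p := by
  by_cases him : z.im = 0
  · have hz' : (z.re : ℂ) = z := Complex.ext rfl him.symm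
    have hroot : p.IsRoot z.re := by
      rw [← hz', ← Complex.coe_algebraMap, aeval_algebraMap_apply_eq_algebraMap_eval] at hz
      exact (map_eq_zero_iff _ (algebraMap ℝ ℂ).injective).mp hz
    refine ⟨X + C (-z.re), monic_X_add_C _, by rw [natDegree_X_add_C]; exact one_pos,
      hasPosCoeffs_X_add_C (neg_pos.mpr hre), ?_⟩
    rw [C_neg, ← sub_eq_add_neg]
    exact dvd_iff_isRoot.mpr hroot
  · have hnorm : 0 < ‖z‖ ^ 2 := by
      have : z ≠ 0 := fun h => him (by simp [h])
      positivity
    have hdvd := p.quadratic_dvd_of_aeval_eq_zero_im_ne_zero hz him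
    rw [sub_eq_add_neg, ← neg_mul, ← C_neg] at hdvd
    refine ⟨_, ?_, ?_, hasPosCoeffs_quadratic (by linarith) hnorm, hdvd⟩
    · monicity!
    · have : (X ^ 2 + C (-(2 * z.re)) * X + C (‖z‖ ^ 2)).natDegree = 2 := by compute_degree!
      omega

theorem Monic.hasPosCoeffs_of_forall_aeval_eq_zero_re_neg {p : ℝ[X]} (hp : p.Monic)
    (hroots : ∀ z : ℂ, aeval z p = 0 → z.re < 0) : p.HasPosCoeffs := by
  induction hd : p.natDegree using Nat.strong_induction_on generalizing p with
  | _ d ih =>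
  rcases Nat.eq_zero_or_pos d with rfl | hpos
  · rw [hp.natDegree_eq_zero.mp hd]
    exact hasPosCoeffs_one
  obtain ⟨z, hz⟩ := IsAlgClosed.exists_aeval_eq_zero ℂ p
    (by rw [degree_eq_natDegree hp.ne_zero, hd]; exact_mod_cast hpos.ne')
  obtain ⟨f, hf, hfdeg, hfpos, q, rfl⟩ := exists_monic_dvd_hasPosCoeffs_of_aeval_eq_zero hz
    (hroots z hz)
  have hq : q.Monic := hf.of_mul_monic_left hp
  refine hfpos.mul (ih q.natDegree ?_ hq (fun w hw => hroots w (by simp [hw])) rfl)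
  rw [← hd, hf.natDegree_mul hq]
  omega

end Polynomial

theorem stmt_9_general (n : ℕ) (hn : 1 ≤ n) (M : Matrix (Fin n) (Fin n) ℝ)
    (D : Matrix (Fin n) (Fin n) ℝ)
    (Ω : Set ℝ)
    (hΩ : Ω = {t : ℝ | ∃ i < n, (M + (t - 1) • D).charpoly.coeff i = 0})
    (σ : ℝ)
    (h0 : (M + (σ - 1) • D).det = 0)
    (hlt : ∀ σ' : ℝ, σ < σ' →
      ∀ z : ℂ, ((M + (σ' - 1) • D).charpoly.map (algebraMap ℝ ℂ)).IsRoot z →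
        z.re < 0) :
    σ ∈ Ω ∧ ∀ t ∈ Ω, t ≤ σ := by
  subst hΩ
  refine ⟨⟨0, hn, ?_⟩, fun t ⟨i, hi, hcoeff⟩ => ?_⟩
  · rw [det_eq_sign_charpoly_coeff] at h0
    exact (mul_eq_zero.mp h0).resolve_left (pow_ne_zero _ (by norm_num))
  by_contra! hσt
  have hpos := (charpoly_monic _).hasPosCoeffs_of_forall_aeval_eq_zero_re_neg
    fun z hz => hlt t hσt z (by rwa [IsRoot, eval_map_algebraMap])
  exact (hpos i (by rw [charpoly_natDegree_eq_dim, Fintype.card_fin]; omega)).ne' hcoeff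

theorem stmt_9 (n : ℕ) (hn : 1 ≤ n) (M : Matrix (Fin n) (Fin n) ℝ)
    (D : Matrix (Fin n) (Fin n) ℝ) (hD : D = Matrix.diagonal (fun i => M i i))
    (Ω : Set ℝ)
    (hΩ : Ω = {t : ℝ | ∃ i < n, (M + (t - 1) • D).charpoly.coeff i = 0})
    (σ : ℝ)
    (h0 : (M + (σ - 1) • D).det = 0)
    (hle : ∀ z : ℂ, ((M + (σ - 1) • D).charpoly.map (algebraMap ℝ ℂ)).IsRoot z →
      z.re ≤ 0)
    (hlt : ∀ σ' : ℝ, σ < σ' →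
      ∀ z : ℂ, ((M + (σ' - 1) • D).charpoly.map (algebraMap ℝ ℂ)).IsRoot z →
        z.re < 0) :
    σ ∈ Ω ∧ ∀ t ∈ Ω, t ≤ σ :=
  stmt_9_general n hn M D Ω hΩ σ h0 hlt
end
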